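/- The map that takes a DDP (dispersed Dyck path) of length 2k containing at least one right step, replaces its last right step (x,0)→(x+1,0) by an up step (x,0)→(x+1,1), lifts the remainder of the path by 1, and appends a final down step (2k,1)→(2k+1,0), is a bijection from the set of DDPs of length 2k containing at least one right step onto the set of DDPs of length 2k+1 ending in a down step that contain at least one up step from height 0 that is not the first return-free one, equivalently onto the DDPs of length 2k+1 ending in a down step that are not proper Dyck paths. -/

import Mathlib

inductive DStep | up | down | right
deriving DecidableEq, Repr

instance instFintypeDStep : Fintype DStep :=
  ⟨{DStep.up, DStep.down, DStep.right}, fun x => by cases x <;> simp⟩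

/-- Run a dispersed Dyck path from height `h`; `none` if an illegal step occurs,
otherwise the final height. Down steps require positive height; right steps require height 0. -/
def DStep.run : ℕ → List DStep → Option ℕ
  | h, [] => some h
  | h, .up :: l => DStep.run (h + 1) l
  | h + 1, .down :: l => DStep.run h l
  | 0, .down :: _ => none
  | 0, .right :: l => DStep.run 0 l
  | _ + 1, .right :: _ => none

/-- A dispersed Dyck path: starts and ends at height 0, all steps legal. -/
def IsDDP (l : List DStep) : Prop := DStep.run 0 l = some 0

instance : DecidablePred IsDDP := fun l => by unfold IsDDP; infer_instance

/-- The finset of all dispersed Dyck paths of length `n`. -/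
def DDPs (n : ℕ) : Finset (List.Vector DStep n) :=
  Finset.univ.filter (fun v => IsDDP v.toList)

/-- Number of dispersed Dyck paths of length `n`. -/
def dD (n : ℕ) : ℕ := (DDPs n).card

/-- Total number of up steps over all DDPs of length `n`. -/
def U (n : ℕ) : ℕ := ∑ v ∈ DDPs n, v.toList.count DStep.up

/-- Total number of down steps over all DDPs of length `n`. -/
def D (n : ℕ) : ℕ := ∑ v ∈ DDPs n, v.toList.count DStep.down

/-- Total number of right steps over all DDPs of length `n`. -/
def R (n : ℕ) : ℕ := ∑ v ∈ DDPs n, v.toList.count DStep.right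

/-- `i` is the position of a 1-ascent in `l`: an up step with no adjacent up step. -/
def IsOneAscentAt (l : List DStep) (i : ℕ) : Prop :=
  l[i]? = some .up ∧ l[i + 1]? ≠ some .up ∧ (i = 0 ∨ l[i - 1]? ≠ some .up)

instance (l : List DStep) : DecidablePred (IsOneAscentAt l) := fun i => by
  unfold IsOneAscentAt; infer_instance

/-- Number of 1-ascents in `l`. -/
def oneAsc (l : List DStep) : ℕ :=
  ((Finset.range l.length).filter (IsOneAscentAt l)).card

/-- Total number of 1-ascents over all DDPs of length `n`. -/
def A (n : ℕ) : ℕ := ∑ v ∈ DDPs n, oneAsc v.toList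

/-- Signed final height of a plain path (ignoring any right steps). -/
def psum : List DStep → ℤ
  | [] => 0
  | .up :: l => 1 + psum l
  | .down :: l => -1 + psum l
  | .right :: l => psum l


/-- Replace the last right step of `l` by an up step and append a final down step. -/
def liftMap (l : List DStep) : List DStep :=
  (l.set (l.length - 1 - l.reverse.idxOf DStep.right) DStep.up) ++ [DStep.down]

namespace DStep

theorem run_append (l1 l2 : List DStep) : ∀ h, run h (l1 ++ l2) = (run h l1).bind (fun h' => run h' l2) := by
  induction l1 with
  | nil => intro h; simp [run]
  | cons x t ih =>
    intro h
    match x, h with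
    | up, h => simpa [run] using ih (h+1)
    | down, 0 => simp [run]
    | down, h+1 => simpa [run] using ih h
    | right, 0 => simpa [run] using ih 0
    | right, h+1 => simp [run]

theorem run_shift : ∀ (b : List DStep), right ∉ b → ∀ (h h' : ℕ), run h b = some h' → run (h+1) b = some (h'+1) := by
  intro b
  induction b with
  | nil => intro _ h h' e; simp [run] at e ⊢; omega
  | cons x t ih =>
    intro hb h h' e
    simp only [List.mem_cons, not_or] at hb
    match x, h with
    | up, h => simp only [run] at e ⊢; exact ih hb.2 _ _ e
    | down, 0 => simp [run] at e
    | down, h+1 => simp only [run] at e ⊢; exact ih hb.2 _ _ e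
    | right, h => exact absurd rfl hb.1

theorem run_unshift : ∀ (b : List DStep), right ∉ b → ∀ (h h' : ℕ),
    (∀ i, run (h+1) (b.take i) ≠ some 0) → run (h+1) b = some (h'+1) → run h b = some h' := by
  intro b
  induction b with
  | nil => intro _ h h' _ e; simp [run] at e ⊢; omega
  | cons x t ih =>
    intro hb h h' hc e
    simp only [List.mem_cons, not_or] at hb
    match x, h with
    | up, h =>
      simp only [run] at e ⊢
      exact ih hb.2 (h+1) h' (fun i => by simpa [run] using hc (i+1)) e
    | down, 0 => exact absurd (by simp [run]) (hc 1)
    | down, g+1 =>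
      simp only [run] at e ⊢
      exact ih hb.2 g h' (fun i => by simpa [run] using hc (i+1)) e
    | right, h => exact absurd rfl hb.1

theorem run_take (l : List DStep) (h h' : ℕ) (e : run h l = some h') (i : ℕ) :
    ∃ g, run h (l.take i) = some g := by
  have := run_append (l.take i) (l.drop i) h
  rw [List.take_append_drop, e] at this
  cases hg : run h (l.take i) with
  | none => rw [hg] at this; simp at this
  | some g => exact ⟨g, rfl⟩

theorem count_up_eq : ∀ (l : List DStep) (h h' : ℕ), run h l = some h' →
    (l.count up : ℤ) + h = l.count down + h' := by
  intro l
  induction l with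
  | nil => intro h h' e; simp [run] at e ⊢; omega
  | cons x t ih =>
    intro h h' e
    match x, h with
    | up, h => simp only [run] at e; have := ih _ _ e; simp [List.count_cons]; omega
    | down, 0 => simp [run] at e
    | down, h+1 => simp only [run] at e; have := ih _ _ e; simp [List.count_cons]; omega
    | right, 0 => simp only [run] at e; have := ih _ _ e; simp [List.count_cons]; omega
    | right, h+1 => simp [run] at e

theorem length_eq_counts : ∀ (l : List DStep), l.length = l.count up + l.count down + l.count right := by
  intro l
  induction l with
  | nil => simp
  | cons x t ih => cases x <;> simp [List.count_cons, ih] <;> omega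

theorem exists_last_right : ∀ (l : List DStep), right ∈ l → ∃ a b, l = a ++ right :: b ∧ right ∉ b := by
  intro l
  induction l using List.reverseRecOn with
  | nil => simp
  | append_singleton t x ih =>
    intro hm
    by_cases hx : x = right
    · exact ⟨t, [], by simp [hx], by simp⟩
    · have : right ∈ t := by
        rcases List.mem_append.1 hm with h | h
        · exact h
        · simp at h; exact absurd h.symm hx
      obtain ⟨a, b, rfl, hb⟩ := ih this
      exact ⟨a, b ++ [x], by simp, by simp [hb, Ne.symm hx]⟩

theorem liftMap_eq (a b : List DStep) (hb : right ∉ b) :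
    liftMap (a ++ right :: b) = a ++ up :: (b ++ [down]) := by
  unfold liftMap
  have hrev : (a ++ right :: b).reverse = b.reverse ++ right :: a.reverse := by simp
  have hidx : ((a ++ right :: b).reverse).idxOf right = b.length := by
    rw [hrev, List.idxOf_append_of_notMem (by simpa using hb)]
    simp [List.idxOf_cons_self]
  have hlen : (a ++ right :: b).length = a.length + 1 + b.length := by simp; omega
  have hpos : (a ++ right :: b).length - 1 - ((a ++ right :: b).reverse).idxOf right = a.length := by
    rw [hidx, hlen]; omega
  rw [hpos, List.set_append, if_neg (by omega)]
  simp

theorem ddp_decomp (a b : List DStep) (h : run 0 (a ++ right :: b) = some 0) :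
    run 0 a = some 0 ∧ run 0 b = some 0 := by
  rw [run_append] at h
  cases ha : run 0 a with
  | none => rw [ha] at h; simp at h
  | some g =>
    rw [ha] at h
    match g with
    | 0 => exact ⟨rfl, by simpa [run] using h⟩
    | g+1 => simp [run] at h

theorem run_lifted (a b : List DStep) (ha : run 0 a = some 0) (hb : run 0 b = some 0)
    (hnb : right ∉ b) : run 0 (a ++ up :: (b ++ [down])) = some 0 := by
  rw [run_append, ha]
  have h1 : run 1 b = some 1 := run_shift b hnb 0 0 hb
  simp only [Option.bind_some]
  show run 0 (up :: (b ++ [down])) = some 0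
  have : run 0 (up :: (b ++ [down])) = run 1 (b ++ [down]) := by simp [run]
  rw [this, run_append, h1]
  simp [run]

-- uniqueness helper
theorem not_lt_helper (a1 b1 a2 b2 : List DStep) (heq : a1 ++ up :: b1 = a2 ++ up :: b2)
    (ha1 : run 0 a1 = some 0) (ha2 : run 0 a2 = some 0) (hb1 : run 0 b1 = some 0)
    (hnb1 : right ∉ b1) (hlt : a1.length < a2.length) : False := by
  have htake : (a2 ++ up :: b2).take a2.length = a2 := List.take_left
  rw [← heq] at htake
  set j := a2.length - a1.length - 1 with hj
  have hsplit : (a1 ++ up :: b1).take a2.length = a1 ++ up :: b1.take j := by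
    rw [List.take_append, List.take_of_length_le (le_of_lt hlt)]
    congr 1
    have h2 : a2.length - a1.length = j + 1 := by omega
    rw [h2, List.take_succ_cons]
  rw [hsplit] at htake
  obtain ⟨g, hg⟩ := run_take b1 0 0 hb1 j
  have hg1 : run 1 (b1.take j) = some (g+1) :=
    run_shift _ (fun hm => hnb1 (List.mem_of_mem_take hm)) 0 g hg
  have : run 0 (a1 ++ up :: b1.take j) = some (g+1) := by
    rw [run_append, ha1]
    simpa [run] using hg1
  rw [htake, ha2] at this
  simp at this

theorem uniq (a1 b1 a2 b2 : List DStep) (heq : a1 ++ up :: b1 = a2 ++ up :: b2)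
    (ha1 : run 0 a1 = some 0) (ha2 : run 0 a2 = some 0)
    (hb1 : run 0 b1 = some 0) (hb2 : run 0 b2 = some 0)
    (hnb1 : right ∉ b1) (hnb2 : right ∉ b2) : a1 = a2 ∧ b1 = b2 := by
  have hlen : a1.length = a2.length := by
    rcases lt_trichotomy a1.length a2.length with h | h | h
    · exact absurd (not_lt_helper a1 b1 a2 b2 heq ha1 ha2 hb1 hnb1 h) not_false
    · exact h
    · exact absurd (not_lt_helper a2 b2 a1 b1 heq.symm ha2 ha1 hb2 hnb2 h) not_false
  obtain ⟨h1, h2⟩ := List.append_inj heq hlen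
  exact ⟨h1, by injection h2⟩

end DStep

open DStep

/-- The map replacing the last right step by an up step and appending a down step is a
bijection from DDPs of length `2k` containing a right step onto DDPs of length `2k+1`
ending in a down step that are not proper Dyck paths (i.e. contain a right step). -/
theorem liftMap_bijOn (k : ℕ) (hk : 1 ≤ k) :
    Set.BijOn liftMap
      {l : List DStep | l.length = 2 * k ∧ IsDDP l ∧ DStep.right ∈ l}
      {l : List DStep | l.length = 2 * k + 1 ∧ IsDDP l ∧
        l.getLast? = some DStep.down ∧ DStep.right ∈ l} := by
  refine ⟨?_, ?_, ?_⟩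
  · -- MapsTo
    rintro l ⟨hlen, hddp, hmem⟩
    obtain ⟨a, b, rfl, hb⟩ := exists_last_right l hmem
    obtain ⟨ha, hbd⟩ := ddp_decomp a b hddp
    rw [Set.mem_setOf_eq, liftMap_eq a b hb]
    have hra : right ∈ a := by
      have hcount := count_up_eq _ 0 0 hddp
      have hlc := length_eq_counts (a ++ right :: b)
      have hc1 : (a ++ right :: b).count right = a.count right + 1 := by
        simp [List.count_cons, List.count_eq_zero.2 hb]
      rw [hc1, hlen] at hlc
      have hpos : 0 < a.count right := by omega
      exact List.count_pos_iff.1 hpos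
    refine ⟨?_, ?_, ?_, ?_⟩
    · simp at hlen ⊢; omega
    · exact run_lifted a b ha hbd hb
    · have : a ++ up :: (b ++ [down]) = (a ++ up :: b) ++ [down] := by simp
      rw [this, List.getLast?_concat]
    · exact List.mem_append.2 (Or.inl hra)
  · -- InjOn
    rintro l1 ⟨_, hd1, hm1⟩ l2 ⟨_, hd2, hm2⟩ heq
    obtain ⟨a1, b1, rfl, hb1⟩ := exists_last_right l1 hm1
    obtain ⟨a2, b2, rfl, hb2⟩ := exists_last_right l2 hm2
    obtain ⟨ha1, hbd1⟩ := ddp_decomp a1 b1 hd1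
    obtain ⟨ha2, hbd2⟩ := ddp_decomp a2 b2 hd2
    rw [liftMap_eq a1 b1 hb1, liftMap_eq a2 b2 hb2] at heq
    have e1 : a1 ++ up :: (b1 ++ [down]) = (a1 ++ up :: b1) ++ [down] := by simp
    have e2 : a2 ++ up :: (b2 ++ [down]) = (a2 ++ up :: b2) ++ [down] := by simp
    rw [e1, e2] at heq
    have heq' := congrArg List.dropLast heq
    rw [List.dropLast_concat, List.dropLast_concat] at heq'
    obtain ⟨hA, hB⟩ := uniq a1 b1 a2 b2 heq' ha1 ha2 hbd1 hbd2 hb1 hb2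
    rw [hA, hB]
  · -- SurjOn
    rintro m ⟨hlen, hddp, hlast, hmem⟩
    obtain ⟨s, x0, rfl⟩ : ∃ s x0, m = s ++ [x0] := by
      rcases List.eq_nil_or_concat m with rfl | ⟨s, x0, rfl⟩
      · simp at hlast
      · exact ⟨s, x0, by simp⟩
    have hx0 : x0 = down := by
      rw [List.getLast?_concat] at hlast
      simpa using hlast
    subst hx0
    have hs1 : run 0 s = some 1 := by
      unfold IsDDP at hddp
      rw [run_append] at hddp
      cases hr : run 0 s with
      | none => rw [hr] at hddp; simp at hddp
      | some g =>
        rw [hr] at hddp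
        match g, hddp with
        | 0, hddp => simp [run] at hddp
        | g+1, hddp =>
          have hg : g = 0 := by simpa [run] using hddp
          simp [hg]
    -- maximal prefix at height 0
    have h0F : (0 : ℕ) ∈ (Finset.range (s.length + 1)).filter (fun i => run 0 (s.take i) = some 0) := by
      simp [run]
    have hFne : ((Finset.range (s.length + 1)).filter (fun i => run 0 (s.take i) = some 0)).Nonempty := ⟨0, h0F⟩
    obtain ⟨p, hpF, hle⟩ : ∃ p, p ∈ (Finset.range (s.length + 1)).filter (fun i => run 0 (s.take i) = some 0) ∧
        ∀ i ∈ (Finset.range (s.length + 1)).filter (fun i => run 0 (s.take i) = some 0), i ≤ p :=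
      ⟨_, Finset.max'_mem _ hFne, fun i hi => Finset.le_max' _ i hi⟩
    have hmax : ∀ i, i ≤ s.length → run 0 (s.take i) = some 0 → i ≤ p := by
      intro i hi he
      exact hle i (by simp only [Finset.mem_filter, Finset.mem_range]; exact ⟨by omega, he⟩)
    simp only [Finset.mem_filter, Finset.mem_range] at hpF
    obtain ⟨hplt, ha⟩ := hpF
    have hps : p < s.length := by
      rcases eq_or_lt_of_le (Nat.lt_succ_iff.1 hplt) with h | h
      · rw [h, List.take_of_length_le (le_refl _)] at ha
        rw [hs1] at ha; simp at ha
      · exact h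
    obtain ⟨x, b, hsplit⟩ : ∃ x b, s = s.take p ++ x :: b := by
      refine ⟨s[p]'hps, s.drop (p+1), ?_⟩
      conv_lhs => rw [← List.take_append_drop p s]
      rw [List.drop_eq_getElem_cons hps]
    have hal : (s.take p).length = p := by simp; omega
    have hsl : s.length = p + 1 + b.length := by
      have := congrArg List.length hsplit
      simp at this; omega
    have htk : ∀ i, s.take (p + 1 + i) = s.take p ++ x :: b.take i := by
      intro i
      conv_lhs => rw [hsplit]
      rw [List.take_append, List.take_of_length_le (by rw [hal]; omega)]
      congr 1
      rw [hal]
      have h9 : p + 1 + i - p = i + 1 := by omega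
      rw [h9, List.take_succ_cons]
    have hxb : run 0 (x :: b) = some 1 := by
      rw [hsplit, run_append, ha] at hs1
      simpa using hs1
    cases x with
    | down => simp [run] at hxb
    | right =>
      exfalso
      have h5 : run 0 (s.take (p + 1)) = some 0 := by
        have h6 := htk 0
        simp only [Nat.add_zero] at h6
        rw [h6, run_append, ha]
        have : run 0 (right :: b.take 0) = some 0 := by simp [run]
        simpa using this
      have := hmax (p+1) (by omega) h5
      omega
    | up =>
      have hb1 : run 1 b = some 1 := by simpa [run] using hxb
      have hnz : ∀ i, run 1 (b.take i) ≠ some 0 := by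
        intro i he
        by_cases hi : i ≤ b.length
        · have h5 : run 0 (s.take (p + 1 + i)) = some 0 := by
            rw [htk i, run_append, ha]
            have : run 0 (up :: b.take i) = some 0 := by simp [run, he]
            simpa using this
          have := hmax (p+1+i) (by omega) h5
          omega
        · rw [List.take_of_length_le (by omega)] at he
          exact absurd (hb1.symm.trans he) (by simp)
      have hnb : right ∉ b := by
        intro hm
        obtain ⟨c, d, hbd⟩ := List.append_of_mem hm
        have hra := run_append c (right :: d) 1
        rw [← hbd, hb1] at hra
        cases hc : run 1 c with
        | none => rw [hc] at hra; simp at hra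
        | some g =>
          rw [hc] at hra
          simp only [Option.bind_some] at hra
          match g, hra with
          | 0, hra => exact hnz c.length (by rw [hbd, List.take_left]; exact hc)
          | g+1, hra => simp [run] at hra
      have hb0 : run 0 b = some 0 := run_unshift b hnb 0 0 hnz hb1
      have hra2 : right ∈ s.take p := by
        have hms : right ∈ s := by
          rcases List.mem_append.1 hmem with h | h
          · exact h
          · simp at h
        rw [hsplit] at hms
        rcases List.mem_append.1 hms with h | h
        · exact h
        · rcases List.mem_cons.1 h with h | h
          · simp at h
          · exact absurd h hnb
      refine ⟨s.take p ++ right :: b, ⟨?_, ?_, ?_⟩, ?_⟩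
      · rw [List.length_append, List.length_cons, hal]
        simp only [List.length_append, List.length_singleton] at hlen
        omega
      · show run 0 _ = some 0
        rw [run_append, ha]
        have : run 0 (right :: b) = some 0 := by simp [run, hb0]
        simpa using this
      · exact List.mem_append.2 (Or.inr List.mem_cons_self)
      · rw [liftMap_eq _ _ hnb]
        conv_rhs => rw [hsplit]
        simp
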